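/- arXiv:math-ph/0701007 — 6 statements merged into one kernel-verified Lean document; each statement's English description precedes it below -/
import Mathlib

section
/- Let m, ℏ > 0 and let R : ℝ → ℝ be twice continuously differentiable with R(x) > 0 for all x; define the quantum potential Q(x) = −(ℏ²/(2m))·R''(x)/R(x). Let S, V : ℝ × ℝ → ℝ (functions of x and t) with S smooth, and suppose that for all (x,t): ∂ₜS + (1/(2m))·(∂ₓS)² + Q + V = 0 and ∂ₓ(R²·∂ₓS) = 0. Then: (i) the quantity R(x)²·∂ₓS(x,t) is independent of x, so it defines a function f(t), differentiable in t; and (ii) for all (x,t): ∂ₓV(x,t) = (1/R(x)²)·[ (2·f(t)²/m)·(R'(x)/R(x)³) − f'(t) ] − Q'(x). -/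
/-- Proposition 5.1 of the paper (formula part, equation (5.10)): for a time-independent
quantum potential `Q(x) = −(ℏ²/(2m))R''/R` and a pair `(S,V)` solving the quantum
Hamilton–Jacobi equation and the continuity equation `∂ₓ(R²∂ₓS) = 0`, the quantity
`R²∂ₓS` is a function `f(t)` of time alone and `∂ₓV` is determined by `Q` and `f`. -/
theorem potential_gradient_from_quantum_potential
    (m ℏ : ℝ) (hm : 0 < m) (hℏ : 0 < ℏ)
    (R : ℝ → ℝ) (hR : ContDiff ℝ 2 R) (hRpos : ∀ x : ℝ, 0 < R x)
    (Q : ℝ → ℝ) (hQ : ∀ x : ℝ, Q x = -(ℏ ^ 2 / (2 * m)) * deriv (deriv R) x / R x)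
    (S V : ℝ × ℝ → ℝ) (hS : ContDiff ℝ (⊤ : ℕ∞) S)
    (hHJ : ∀ x t : ℝ,
      deriv (fun s => S (x, s)) t
        + (1 / (2 * m)) * (deriv (fun y => S (y, t)) x) ^ 2
        + Q x + V (x, t) = 0)
    (hCont : ∀ x t : ℝ,
      deriv (fun y => (R y) ^ 2 * deriv (fun z => S (z, t)) y) x = 0) :
    ∃ f : ℝ → ℝ, Differentiable ℝ f ∧
      (∀ x t : ℝ, (R x) ^ 2 * deriv (fun y => S (y, t)) x = f t) ∧
      (∀ x t : ℝ,
        deriv (fun y => V (y, t)) x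
          = (1 / (R x) ^ 2) * ((2 * (f t) ^ 2 / m) * (deriv R x / (R x) ^ 3) - deriv f t)
            - deriv Q x) := by
  have hRne : ∀ x, R x ≠ 0 := fun x => (hRpos x).ne'
  have hR2ne : ∀ x, (R x) ^ 2 ≠ 0 := fun x => pow_ne_zero 2 (hRne x)
  have hRd : Differentiable ℝ R := hR.differentiable two_ne_zero
  set A := fderiv ℝ S with hAdef
  have hSd : Differentiable ℝ S := hS.differentiable (by simp)
  have hA : ContDiff ℝ (⊤ : ℕ∞) A := hS.fderiv_right (by simp)
  have hAd : Differentiable ℝ A := hA.differentiable (by simp)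
  -- partial derivatives
  have hx : ∀ x t : ℝ, HasDerivAt (fun y => S (y, t)) (A (x, t) (1, 0)) x := by
    intro x t
    have h1 : HasDerivAt (fun y : ℝ => (y, t)) ((1 : ℝ), (0 : ℝ)) x :=
      (hasDerivAt_id x).prodMk (hasDerivAt_const x t)
    simpa [Function.comp_def] using (hSd (x, t)).hasFDerivAt.comp_hasDerivAt x h1
  have ht : ∀ x t : ℝ, HasDerivAt (fun s => S (x, s)) (A (x, t) (0, 1)) t := by
    intro x t
    have h1 : HasDerivAt (fun s : ℝ => (x, s)) ((0 : ℝ), (1 : ℝ)) t :=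
      (hasDerivAt_const t x).prodMk (hasDerivAt_id t)
    simpa [Function.comp_def] using (hSd (x, t)).hasFDerivAt.comp_hasDerivAt t h1
  -- the continuity equation: R² ∂ₓ S is constant in x
  have key : ∀ x t : ℝ, R x ^ 2 * A (x, t) (1, 0) = R 0 ^ 2 * A (0, t) (1, 0) := by
    intro x t
    have hA1 : Differentiable ℝ (fun y : ℝ => A (y, t)) :=
      hAd.comp (differentiable_id.prodMk (differentiable_const t))
    have hG : Differentiable ℝ (fun y => R y ^ 2 * A (y, t) (1, 0)) :=
      (hRd.pow 2).mul (hA1.clm_apply (differentiable_const _))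
    have hGd : ∀ y, deriv (fun y => R y ^ 2 * A (y, t) (1, 0)) y = 0 := by
      intro y
      have h0 := hCont y t
      have heq : (fun y => R y ^ 2 * deriv (fun z => S (z, t)) y)
          = fun y => R y ^ 2 * A (y, t) (1, 0) := funext fun y => by rw [(hx y t).deriv]
      rwa [heq] at h0
    exact is_const_of_deriv_eq_zero hG hGd x 0
  set f : ℝ → ℝ := fun t => R 0 ^ 2 * A (0, t) (1, 0) with hfdef
  have hfx : ∀ x t : ℝ, R x ^ 2 * A (x, t) (1, 0) = f t := key
  have hAval : ∀ x t : ℝ, A (x, t) (1, 0) = f t / R x ^ 2 := by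
    intro x t
    rw [eq_div_iff (hR2ne x), mul_comm, hfx]
  -- derivative of f in t
  have hft : ∀ x t : ℝ, HasDerivAt f (R x ^ 2 * fderiv ℝ A (x, t) (0, 1) (1, 0)) t := by
    intro x t
    have hc : HasDerivAt (fun s : ℝ => (x, s)) ((0 : ℝ), (1 : ℝ)) t :=
      (hasDerivAt_const t x).prodMk (hasDerivAt_id t)
    have h1 : HasDerivAt (fun s : ℝ => A (x, s)) (fderiv ℝ A (x, t) (0, 1)) t := by
      simpa [Function.comp_def] using (hAd (x, t)).hasFDerivAt.comp_hasDerivAt t hc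
    have h2 : HasDerivAt (fun s => A (x, s) (1, 0)) (fderiv ℝ A (x, t) (0, 1) (1, 0)) t := by
      simpa using h1.clm_apply (hasDerivAt_const t ((1 : ℝ), (0 : ℝ)))
    have hfeq : f = fun s => R x ^ 2 * A (x, s) (1, 0) := funext fun s => (hfx x s).symm
    rw [hfeq]
    exact h2.const_mul (R x ^ 2)
  have hfdiff : Differentiable ℝ f := fun t => (hft 0 t).differentiableAt
  -- symmetry of second derivatives
  have hsym : ∀ p : ℝ × ℝ, fderiv ℝ A p (1, 0) (0, 1) = fderiv ℝ A p (0, 1) (1, 0) := fun p =>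
    second_derivative_symmetric (fun y => (hSd y).hasFDerivAt) (hAd p).hasFDerivAt (1, 0) (0, 1)
  -- x-derivative of ∂ₜ S
  have hwx : ∀ x t : ℝ, HasDerivAt (fun y => A (y, t) (0, 1)) (deriv f t / R x ^ 2) x := by
    intro x t
    have hc : HasDerivAt (fun y : ℝ => (y, t)) ((1 : ℝ), (0 : ℝ)) x :=
      (hasDerivAt_id x).prodMk (hasDerivAt_const x t)
    have h1 : HasDerivAt (fun y : ℝ => A (y, t)) (fderiv ℝ A (x, t) (1, 0)) x := by
      simpa [Function.comp_def] using (hAd (x, t)).hasFDerivAt.comp_hasDerivAt x hc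
    have h2 : HasDerivAt (fun y => A (y, t) (0, 1)) (fderiv ℝ A (x, t) (1, 0) (0, 1)) x := by
      simpa using h1.clm_apply (hasDerivAt_const x ((0 : ℝ), (1 : ℝ)))
    have h3 : deriv f t = R x ^ 2 * fderiv ℝ A (x, t) (0, 1) (1, 0) := (hft x t).deriv
    have h4 : fderiv ℝ A (x, t) (1, 0) (0, 1) = deriv f t / R x ^ 2 := by
      rw [hsym (x, t), h3]
      exact (mul_div_cancel_left₀ _ (hR2ne x)).symm
    rwa [h4] at h2
  -- expression for V
  have hVeq : ∀ t : ℝ, (fun y => V (y, t))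
      = fun y => (-(A (y, t) (0, 1)) - 1 / (2 * m) * (f t / R y ^ 2) ^ 2) - Q y := by
    intro t
    funext y
    have h0 := hHJ y t
    rw [(ht y t).deriv, (hx y t).deriv, hAval] at h0
    linarith
  -- derivative of the differentiable part of V
  have hg : ∀ x t : ℝ, HasDerivAt
      (fun y => -(A (y, t) (0, 1)) - 1 / (2 * m) * (f t / R y ^ 2) ^ 2)
      ((1 / (R x) ^ 2) * ((2 * (f t) ^ 2 / m) * (deriv R x / (R x) ^ 3) - deriv f t)) x := by
    intro x t
    have hpow : HasDerivAt (fun y => R y ^ 2) (2 * R x ^ 1 * deriv R x) x :=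
      (hRd x).hasDerivAt.pow 2
    have hdiv : HasDerivAt (fun y => f t / R y ^ 2)
        ((0 * R x ^ 2 - f t * (2 * R x ^ 1 * deriv R x)) / (R x ^ 2) ^ 2) x :=
      (hasDerivAt_const x (f t)).div hpow (hR2ne x)
    have hsq := hdiv.fun_pow 2
    have htotal := ((hwx x t).fun_neg).fun_sub (hsq.const_mul (1 / (2 * m)))
    refine htotal.congr_deriv ?_
    norm_num
    field_simp [hRne x]
    ring
  refine ⟨f, hfdiff, fun x t => by rw [(hx x t).deriv]; exact hfx x t, ?_⟩
  intro x t
  rw [hVeq t]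
  by_cases hQd : DifferentiableAt ℝ Q x
  · rw [deriv_fun_sub (hg x t).differentiableAt hQd, (hg x t).deriv]
  · -- Q is not differentiable at x: then f must vanish identically
    have hf0 : f = fun _ => (0 : ℝ) := by
      by_contra hne
      have hex : ∃ t₀, f t₀ ≠ 0 := by
        by_contra hall
        push_neg at hall
        exact hne (funext hall)
      obtain ⟨t₀, ht₀⟩ := hex
      -- R is smooth
      have hu : ContDiff ℝ (⊤ : ℕ∞) (fun y : ℝ => A (y, t₀) (1, 0)) :=
        (hA.comp (contDiff_id.prodMk contDiff_const)).clm_apply contDiff_const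
      have hune : ∀ y, A (y, t₀) (1, 0) ≠ 0 := by
        intro y
        rw [hAval]
        exact div_ne_zero ht₀ (hR2ne y)
      have hRsq : ∀ y, R y ^ 2 = f t₀ / A (y, t₀) (1, 0) := by
        intro y
        rw [hAval]
        field_simp
      have hReq : R = fun y => Real.sqrt (f t₀ / A (y, t₀) (1, 0)) := by
        funext y
        rw [← hRsq y]
        exact (Real.sqrt_sq (hRpos y).le).symm
      have hRsm : ContDiff ℝ (⊤ : ℕ∞) R := by
        rw [hReq]
        rw [contDiff_iff_contDiffAt]
        intro y
        have hpos : (0 : ℝ) < f t₀ / A (y, t₀) (1, 0) := by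
          rw [← hRsq y]; exact pow_pos (hRpos y) 2
        exact (Real.contDiffAt_sqrt hpos.ne').comp y
          ((contDiff_const.div hu hune).contDiffAt)
      have hRinf : ContDiff ℝ (⊤ : ℕ∞) R := hRsm.of_le (by simp)
      have hd1 : ContDiff ℝ (⊤ : ℕ∞) (deriv R) := (contDiff_infty_iff_deriv.mp hRinf).2
      have hd2 : Differentiable ℝ (deriv (deriv R)) :=
        ((contDiff_infty_iff_deriv.mp hd1).2).differentiable (by simp)
      have hQd' : DifferentiableAt ℝ Q x := by
        have hQeq : Q = fun x => -(ℏ ^ 2 / (2 * m)) * deriv (deriv R) x / R x := funext hQ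
        rw [hQeq]
        exact (((hd2 x).const_mul _).div (hRd x) (hRne x))
      exact hQd hQd'
    have hdf0 : deriv f t = 0 := by rw [hf0]; simp
    have hft0 : f t = 0 := by rw [hf0]
    have hgd : HasDerivAt (fun y => -(A (y, t) (0, 1)) - 1 / (2 * m) * (f t / R y ^ 2) ^ 2)
        0 x := by
      have h := hg x t
      have h0 : (1 / (R x) ^ 2) * ((2 * (f t) ^ 2 / m) * (deriv R x / (R x) ^ 3) - deriv f t)
          = 0 := by
        rw [hdf0, hft0]; simp
      rwa [h0] at h
    have hnd : ¬ DifferentiableAt ℝ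
        (fun y => -(A (y, t) (0, 1)) - 1 / (2 * m) * (f t / R y ^ 2) ^ 2 - Q y) x := by
      intro hdiff
      apply hQd
      have hQrw : Q = fun y => (-(A (y, t) (0, 1)) - 1 / (2 * m) * (f t / R y ^ 2) ^ 2)
          - (-(A (y, t) (0, 1)) - 1 / (2 * m) * (f t / R y ^ 2) ^ 2 - Q y) := by
        funext y; ring
      rw [hQrw]
      exact hgd.differentiableAt.sub hdiff
    rw [deriv_zero_of_not_differentiableAt hnd, deriv_zero_of_not_differentiableAt hQd,
      hdf0, hft0]
    simp
end

section
/- Let m, ℏ > 0 and let R : ℝ → ℝ be smooth with R(x) > 0 for all x; define Q(x) = −(ℏ²/(2m))·R''(x)/R(x). Let S, V : ℝ × ℝ → ℝ with S smooth, satisfying for all (x,t): ∂ₜS + (1/(2m))·(∂ₓS)² + Q + V = 0 and ∂ₓ(R²·∂ₓS) = 0, and let f(t) = R(x)²·∂ₓS(x,t) (independent of x). Assume in addition that ∂ₓV is independent of t (i.e. ∂ₜ∂ₓV = 0 everywhere) and that (d/dt)(f(t)²) ≠ 0 for every t. Then there exist real constants c and c̃ such that R(x)²·(c̃ − c·m·x)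 = 1 for all x ∈ ℝ. -/
/-- Impossibility part of Proposition 5.1 of the paper: if in addition `∂ₓV` is
independent of `t` and `(d/dt)(f²)` never vanishes, then separation of variables forces
`R² = 1/(c̃ − c·m·x)` (equation (5.9)), i.e. `R(x)²·(c̃ − c·m·x) = 1` for all `x`. -/
theorem time_independent_potential_forces_explicit_R
    (m ℏ : ℝ) (hm : 0 < m) (hℏ : 0 < ℏ)
    (R : ℝ → ℝ) (hR : ContDiff ℝ (⊤ : ℕ∞) R) (hRpos : ∀ x : ℝ, 0 < R x)
    (Q : ℝ → ℝ) (hQ : ∀ x : ℝ, Q x = -(ℏ ^ 2 / (2 * m)) * deriv (deriv R) x / R x)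
    (S V : ℝ × ℝ → ℝ) (hS : ContDiff ℝ (⊤ : ℕ∞) S)
    (hHJ : ∀ x t : ℝ,
      deriv (fun s => S (x, s)) t
        + (1 / (2 * m)) * (deriv (fun y => S (y, t)) x) ^ 2
        + Q x + V (x, t) = 0)
    (hCont : ∀ x t : ℝ,
      deriv (fun y => (R y) ^ 2 * deriv (fun z => S (z, t)) y) x = 0)
    (f : ℝ → ℝ)
    (hf : ∀ x t : ℝ, (R x) ^ 2 * deriv (fun y => S (y, t)) x = f t)
    (hVx : ∀ x t : ℝ, deriv (fun s => deriv (fun y => V (y, s)) x) t = 0)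
    (hft : ∀ t : ℝ, deriv (fun s => (f s) ^ 2) t ≠ 0) :
    ∃ c ct : ℝ, ∀ x : ℝ, (R x) ^ 2 * (ct - c * m * x) = 1 := by
  have hRne : ∀ x, R x ≠ 0 := fun x => (hRpos x).ne'
  have hSd : Differentiable ℝ S := hS.differentiable (by simp)
  set g := fderiv ℝ S with hg_def
  have hg : ContDiff ℝ (⊤ : ℕ∞) g := hS.fderiv_right (by simp)
  have hgd : Differentiable ℝ g := hg.differentiable (by simp)
  have hRd : Differentiable ℝ R := hR.differentiable (by simp)
  -- partial derivatives via fderiv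
  have hSx : ∀ x t : ℝ, HasDerivAt (fun y => S (y, t)) (g (x, t) ((1:ℝ), (0:ℝ))) x := by
    intro x t
    have h1 : HasDerivAt (fun y : ℝ => (y, t)) ((1:ℝ), (0:ℝ)) x :=
      HasDerivAt.prodMk (hasDerivAt_id x) (hasDerivAt_const x t)
    exact (hSd (x, t)).hasFDerivAt.comp_hasDerivAt x h1
  have hSt : ∀ x t : ℝ, HasDerivAt (fun s => S (x, s)) (g (x, t) ((0:ℝ), (1:ℝ))) t := by
    intro x t
    have h1 : HasDerivAt (fun s : ℝ => (x, s)) ((0:ℝ), (1:ℝ)) t :=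
      HasDerivAt.prodMk (hasDerivAt_const t x) (hasDerivAt_id t)
    exact (hSd (x, t)).hasFDerivAt.comp_hasDerivAt t h1
  have eq1 : ∀ x t : ℝ, g (x, t) ((1:ℝ), (0:ℝ)) = f t / R x ^ 2 := by
    intro x t
    have h := hf x t
    rw [(hSx x t).deriv] at h
    rw [eq_div_iff (pow_ne_zero 2 (hRne x))]
    linarith
  -- f is smooth
  have hfc : ContDiff ℝ (⊤ : ℕ∞) f := by
    have h0 : ContDiff ℝ (⊤ : ℕ∞) (fun t : ℝ => g (0, t) ((1:ℝ), (0:ℝ))) :=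
      (hg.comp (contDiff_const.prodMk contDiff_id)).clm_apply contDiff_const
    have hfe : (fun t : ℝ => R 0 ^ 2 * g (0, t) ((1:ℝ), (0:ℝ))) = f := by
      funext t; rw [← hf 0 t, (hSx 0 t).deriv]
    rw [← hfe]
    exact contDiff_const.mul h0
  have hfd : Differentiable ℝ f := hfc.differentiable (by simp)
  have hfd1 : Differentiable ℝ (deriv f) := by
    have h1 := ContDiff.iterate_deriv 1 (hfc.of_le (by simp))
    have h2 := h1.differentiable (by simp)
    simpa using h2
  -- mixed second partials
  have hGx : ∀ x t : ℝ, HasDerivAt (fun y => g (y, t) ((0:ℝ), (1:ℝ)))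
      (fderiv ℝ g (x, t) ((1:ℝ), (0:ℝ)) ((0:ℝ), (1:ℝ))) x := by
    intro x t
    have h1 : HasDerivAt (fun y : ℝ => g (y, t)) (fderiv ℝ g (x, t) ((1:ℝ), (0:ℝ))) x :=
      (hgd (x, t)).hasFDerivAt.comp_hasDerivAt x
        (HasDerivAt.prodMk (hasDerivAt_id x) (hasDerivAt_const x t))
    have h2 := h1.clm_apply (hasDerivAt_const x ((0:ℝ), (1:ℝ)))
    simpa using h2
  have hGt : ∀ x t : ℝ, HasDerivAt (fun s => g (x, s) ((1:ℝ), (0:ℝ)))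
      (fderiv ℝ g (x, t) ((0:ℝ), (1:ℝ)) ((1:ℝ), (0:ℝ))) t := by
    intro x t
    have h1 : HasDerivAt (fun s : ℝ => g (x, s)) (fderiv ℝ g (x, t) ((0:ℝ), (1:ℝ))) t :=
      (hgd (x, t)).hasFDerivAt.comp_hasDerivAt t
        (HasDerivAt.prodMk (hasDerivAt_const t x) (hasDerivAt_id t))
    have h2 := h1.clm_apply (hasDerivAt_const t ((1:ℝ), (0:ℝ)))
    simpa using h2
  have hsymm : ∀ x t : ℝ, fderiv ℝ g (x, t) ((1:ℝ), (0:ℝ)) ((0:ℝ), (1:ℝ))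
      = fderiv ℝ g (x, t) ((0:ℝ), (1:ℝ)) ((1:ℝ), (0:ℝ)) :=
    fun x t => second_derivative_symmetric (fun y => (hSd y).hasFDerivAt)
      ((hgd (x, t)).hasFDerivAt) _ _
  have hmix : ∀ x t : ℝ, fderiv ℝ g (x, t) ((0:ℝ), (1:ℝ)) ((1:ℝ), (0:ℝ))
      = deriv f t / R x ^ 2 := by
    intro x t
    have h2 : HasDerivAt (fun s => f s / R x ^ 2) (deriv f t / R x ^ 2) t :=
      ((hfd t).hasDerivAt).div_const _
    have he : (fun s => f s / R x ^ 2) = fun s => g (x, s) ((1:ℝ), (0:ℝ)) := by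
      funext s; rw [eq1 x s]
    rw [he] at h2
    exact (hGt x t).unique h2
  -- V explicit
  have hV : ∀ x t : ℝ, V (x, t)
      = -(g (x, t) ((0:ℝ), (1:ℝ))) - (1 / (2 * m)) * f t ^ 2 * (R x ^ 4)⁻¹ - Q x := by
    intro x t
    have h := hHJ x t
    rw [(hSt x t).deriv, (hSx x t).deriv, eq1 x t] at h
    linear_combination h
  -- Q differentiable
  have hQd : Differentiable ℝ Q := by
    have hR2 : Differentiable ℝ (deriv (deriv R)) := by
      have h1 := ContDiff.iterate_deriv 2 (hR.of_le (by simp))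
      have h2 : deriv^[2] R = deriv (deriv R) := by
        simp [Function.iterate_succ, Function.iterate_one]
      rw [h2] at h1
      exact h1.differentiable (by simp)
    have hQe : Q = fun y => -(ℏ ^ 2 / (2 * m)) * deriv (deriv R) y / R y := funext hQ
    rw [hQe]
    exact ((differentiable_const _).mul hR2).div hRd hRne
  -- derivative of V in x
  have hVderiv : ∀ x t : ℝ, HasDerivAt (fun y => V (y, t))
      (-(deriv f t / R x ^ 2)
        - (1 / (2 * m)) * f t ^ 2 * (-(4 * R x ^ 3 * deriv R x) / (R x ^ 4) ^ 2)
        - deriv Q x) x := by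
    intro x t
    have h1 : HasDerivAt (fun y => g (y, t) ((0:ℝ), (1:ℝ))) (deriv f t / R x ^ 2) x := by
      have := hGx x t; rwa [hsymm x t, hmix x t] at this
    have h2 : HasDerivAt (fun y => (R y ^ 4)⁻¹)
        (-(4 * R x ^ 3 * deriv R x) / (R x ^ 4) ^ 2) x := by
      have h4 := ((hRd x).hasDerivAt.pow 4).inv (pow_ne_zero 4 (hRne x))
      refine h4.congr_deriv ?_
      simp only [Pi.pow_apply]
      norm_num
    have h5 := (h1.neg.sub ((h2.const_mul ((1 / (2 * m)) * f t ^ 2)))).sub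
      ((hQd x).hasDerivAt)
    have he : (fun y => -(g (y, t) ((0:ℝ), (1:ℝ)))
        - (1 / (2 * m)) * f t ^ 2 * (R y ^ 4)⁻¹ - Q y) = fun y => V (y, t) := by
      funext y; rw [hV y t]
    rw [← he]
    exact h5
  -- separation of variables
  have key : ∀ x t : ℝ, deriv (deriv f) t / R x ^ 2
      = 2 / m * deriv R x / R x ^ 5 * deriv (fun s => f s ^ 2) t := by
    intro x t
    have h0 := hVx x t
    have hfun : (fun s => deriv (fun y => V (y, s)) x)
        = fun s => -(deriv f s) * (R x ^ 2)⁻¹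
            + f s ^ 2 * (2 / m * deriv R x / R x ^ 5) - deriv Q x := by
      funext s
      rw [(hVderiv x s).deriv]
      have hx : R x ≠ 0 := hRne x
      have hm' : m ≠ 0 := hm.ne'
      field_simp
      ring
    rw [hfun] at h0
    have hdf : HasDerivAt (deriv f) (deriv (deriv f) t) t := (hfd1 t).hasDerivAt
    have hf2 : HasDerivAt (fun s => f s ^ 2) (deriv (fun s => f s ^ 2) t) t := by
      have h := (hfd t).hasDerivAt.pow 2
      rw [(show deriv (fun s => f s ^ 2) t = ↑2 * f t ^ (2 - 1) * deriv f t from h.deriv)]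
      exact h
    have hD : HasDerivAt (fun s => -(deriv f s) * (R x ^ 2)⁻¹
        + f s ^ 2 * (2 / m * deriv R x / R x ^ 5) - deriv Q x)
        (-(deriv (deriv f) t) * (R x ^ 2)⁻¹
          + deriv (fun s => f s ^ 2) t * (2 / m * deriv R x / R x ^ 5)) t := by
      have := ((hdf.neg.mul_const ((R x ^ 2)⁻¹)).add
        (hf2.mul_const (2 / m * deriv R x / R x ^ 5))).sub_const (deriv Q x)
      exact this
    rw [hD.deriv] at h0
    linear_combination -h0
  -- extract the constant
  set K := deriv (deriv f) 0 / deriv (fun s => f s ^ 2) 0 with hK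
  have hRderiv : ∀ x, deriv R x = m * K / 2 * R x ^ 3 := by
    intro x
    have h := key x 0
    have hD0 : deriv (fun s => f s ^ 2) 0 ≠ 0 := hft 0
    have hKe : deriv (deriv f) 0 = K * deriv (fun s => f s ^ 2) 0 := by
      rw [hK, div_mul_cancel₀ _ hD0]
    rw [hKe] at h
    have hx : R x ≠ 0 := hRne x
    have hm' : m ≠ 0 := hm.ne'
    have h2 : K / R x ^ 2 * deriv (fun s => f s ^ 2) 0
        = 2 / m * deriv R x / R x ^ 5 * deriv (fun s => f s ^ 2) 0 := by
      rw [← h]; ring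
    have h3 := mul_right_cancel₀ hD0 h2
    have h3' : K / R x ^ 2 = 2 * deriv R x / (m * R x ^ 5) := by
      rw [h3]; ring
    rw [div_eq_div_iff (pow_ne_zero 2 hx) (mul_ne_zero hm' (pow_ne_zero 5 hx))] at h3'
    have h4 : deriv R x * R x ^ 2 = m * K / 2 * R x ^ 3 * R x ^ 2 := by
      linear_combination (-1/2 : ℝ) * h3'
    exact mul_right_cancel₀ (pow_ne_zero 2 hx) h4
  -- constant-derivative argument
  have hφ : ∀ x, HasDerivAt (fun y => (R y ^ 2)⁻¹ + m * K * y) 0 x := by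
    intro x
    have h2 := ((hRd x).hasDerivAt.pow 2).inv (pow_ne_zero 2 (hRne x))
    have h3 := h2.add ((hasDerivAt_id x).const_mul (m * K))
    refine h3.congr_deriv ?_
    rw [hRderiv x]
    simp only [Pi.pow_apply]
    have hx : R x ≠ 0 := hRne x
    field_simp
    ring
  have hconst : ∀ x : ℝ, (R x ^ 2)⁻¹ + m * K * x = (R 0 ^ 2)⁻¹ + m * K * 0 := by
    intro x
    exact is_const_of_deriv_eq_zero (fun y => (hφ y).differentiableAt)
      (fun y => (hφ y).deriv) x 0
  refine ⟨K, (R 0 ^ 2)⁻¹, fun x => ?_⟩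
  have h := hconst x
  have hx2 : (R x ^ 2) ≠ 0 := pow_ne_zero 2 (hRne x)
  have h2 : (R 0 ^ 2)⁻¹ - K * m * x = (R x ^ 2)⁻¹ := by linarith
  rw [h2, mul_inv_cancel₀ hx2]
end

section
/- Let m, ℏ > 0 and let R, S, V : ℝ × ℝ → ℝ be smooth functions of (x,t) with R > 0 everywhere. Define the quantum potential Q = −(ℏ²/(2m))·(∂ₓ²R)/R and set A = R²·∂ₓS. Suppose that for all (x,t) the continuity equation ∂ₜ(R²) + (1/m)·∂ₓ(R²·∂ₓS) = 0 and the quantum Hamilton–Jacobi equation ∂ₜS + (1/(2m))·(∂ₓS)² + Q + V = 0 hold. Then for all (x,t): ∂ₓV = −∂ₓQ − (1/R²)·( ∂ₜA − 2·(∂ₜR/R)·A ) − (A/(m·R⁴))·( ∂ₓA − 2·(∂ₓR/R)·A ). -/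
private lemma sliceX {f : ℝ × ℝ → ℝ} (hf : Differentiable ℝ f) (x t : ℝ) :
    HasDerivAt (fun y => f (y, t)) (fderiv ℝ f (x, t) ((1 : ℝ), (0 : ℝ))) x :=
  (hf (x, t)).hasFDerivAt.comp_hasDerivAt x
    (HasDerivAt.prodMk (hasDerivAt_id x) (hasDerivAt_const x t))

private lemma sliceT {f : ℝ × ℝ → ℝ} (hf : Differentiable ℝ f) (x t : ℝ) :
    HasDerivAt (fun s => f (x, s)) (fderiv ℝ f (x, t) ((0 : ℝ), (1 : ℝ))) t :=
  (hf (x, t)).hasFDerivAt.comp_hasDerivAt t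
    (HasDerivAt.prodMk (hasDerivAt_const t x) (hasDerivAt_id t))

/-- Proposition 5.2 of the paper (identity (5.12)): with `Q = −(ℏ²/(2m))∂ₓ²R/R` and
`A = R²·∂ₓS`, the quantum Hamilton–Jacobi and continuity equations determine `∂ₓV`
completely in terms of `R` (equivalently `Q`) and `A`. -/
theorem potential_gradient_determined_by_A
    (m ℏ : ℝ) (hm : 0 < m) (hℏ : 0 < ℏ)
    (R S V : ℝ × ℝ → ℝ)
    (hR : ContDiff ℝ (⊤ : ℕ∞) R) (hS : ContDiff ℝ (⊤ : ℕ∞) S) (hV : ContDiff ℝ (⊤ : ℕ∞) V)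
    (hRpos : ∀ p : ℝ × ℝ, 0 < R p)
    (Q : ℝ × ℝ → ℝ)
    (hQ : ∀ x t : ℝ, Q (x, t) = -(ℏ ^ 2 / (2 * m)) * deriv (deriv (fun y => R (y, t))) x / R (x, t))
    (A : ℝ × ℝ → ℝ)
    (hA : ∀ x t : ℝ, A (x, t) = (R (x, t)) ^ 2 * deriv (fun y => S (y, t)) x)
    (hCont : ∀ x t : ℝ,
      deriv (fun s => (R (x, s)) ^ 2) t
        + (1 / m) * deriv (fun y => (R (y, t)) ^ 2 * deriv (fun z => S (z, t)) y) x = 0)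
    (hHJ : ∀ x t : ℝ,
      deriv (fun s => S (x, s)) t
        + (1 / (2 * m)) * (deriv (fun y => S (y, t)) x) ^ 2
        + Q (x, t) + V (x, t) = 0) :
    ∀ x t : ℝ,
      deriv (fun y => V (y, t)) x
        = - deriv (fun y => Q (y, t)) x
          - (1 / (R (x, t)) ^ 2) *
              (deriv (fun s => A (x, s)) t
                - 2 * (deriv (fun s => R (x, s)) t / R (x, t)) * A (x, t))
          - (A (x, t) / (m * (R (x, t)) ^ 4)) *
              (deriv (fun y => A (y, t)) x
                - 2 * (deriv (fun y => R (y, t)) x / R (x, t)) * A (x, t)) := by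
  intro x t
  have hSd : Differentiable ℝ S := hS.differentiable (by simp)
  have hRd : Differentiable ℝ R := hR.differentiable (by simp)
  have hVd : Differentiable ℝ V := hV.differentiable (by simp)
  set D : ℝ × ℝ → (ℝ × ℝ) →L[ℝ] ℝ := fderiv ℝ S with hD
  have hDc : ContDiff ℝ (⊤ : ℕ∞) D := hS.fderiv_right (by simp)
  have hDd : Differentiable ℝ D := hDc.differentiable (by simp)
  set D2 := fderiv ℝ D (x, t) with hD2
  -- g p = ∂ₓS at p, h p = ∂ₜS at p
  set g : ℝ × ℝ → ℝ := fun p => D p ((1 : ℝ), (0 : ℝ)) with hg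
  set h : ℝ × ℝ → ℝ := fun p => D p ((0 : ℝ), (1 : ℝ)) with hh
  -- derivatives of g, h slices
  have hgF : ∀ p : ℝ × ℝ, HasFDerivAt g
      ((ContinuousLinearMap.apply ℝ ℝ ((1 : ℝ), (0 : ℝ))).comp (fderiv ℝ D p)) p := by
    intro p
    exact (ContinuousLinearMap.apply ℝ ℝ ((1 : ℝ), (0 : ℝ))).hasFDerivAt.comp p
      (hDd p).hasFDerivAt
  have hhF : ∀ p : ℝ × ℝ, HasFDerivAt h
      ((ContinuousLinearMap.apply ℝ ℝ ((0 : ℝ), (1 : ℝ))).comp (fderiv ℝ D p)) p := by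
    intro p
    exact (ContinuousLinearMap.apply ℝ ℝ ((0 : ℝ), (1 : ℝ))).hasFDerivAt.comp p
      (hDd p).hasFDerivAt
  -- second derivative symmetry
  have hsymm : D2 ((0 : ℝ), (1 : ℝ)) ((1 : ℝ), (0 : ℝ))
      = D2 ((1 : ℝ), (0 : ℝ)) ((0 : ℝ), (1 : ℝ)) :=
    second_derivative_symmetric (fun y => (hSd y).hasFDerivAt)
      ((hDd (x, t)).hasFDerivAt) _ _
  set sxt : ℝ := D2 ((0 : ℝ), (1 : ℝ)) ((1 : ℝ), (0 : ℝ)) with hsxt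
  -- ∂ₜ(∂ₓS) slice derivative
  have hgT : HasDerivAt (fun s => g (x, s)) sxt t := by
    have := (hgF (x, t)).comp_hasDerivAt t
      (HasDerivAt.prodMk (hasDerivAt_const t x) (hasDerivAt_id t))
    simpa [Function.comp_def] using this
  have hgX : HasDerivAt (fun y => g (y, t)) (D2 ((1 : ℝ), (0 : ℝ)) ((1 : ℝ), (0 : ℝ))) x := by
    have := (hgF (x, t)).comp_hasDerivAt x
      (HasDerivAt.prodMk (hasDerivAt_id x) (hasDerivAt_const x t))
    simpa [Function.comp_def] using this
  have hhX : HasDerivAt (fun y => h (y, t)) sxt x := by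
    have h1 := (hhF (x, t)).comp_hasDerivAt x
      (HasDerivAt.prodMk (hasDerivAt_id x) (hasDerivAt_const x t))
    rw [hsymm]
    simpa [Function.comp_def] using h1
  set sx : ℝ := g (x, t) with hsx
  set sxx : ℝ := D2 ((1 : ℝ), (0 : ℝ)) ((1 : ℝ), (0 : ℝ)) with hsxx
  set r : ℝ := R (x, t) with hr
  set rx : ℝ := fderiv ℝ R (x, t) ((1 : ℝ), (0 : ℝ)) with hrx
  set rt : ℝ := fderiv ℝ R (x, t) ((0 : ℝ), (1 : ℝ)) with hrt
  set vx : ℝ := fderiv ℝ V (x, t) ((1 : ℝ), (0 : ℝ)) with hvx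
  have hrne : r ≠ 0 := (hRpos (x, t)).ne'
  have hmne : m ≠ 0 := hm.ne'
  -- deriv of S slices equal g, h
  have hderivSx : ∀ y s : ℝ, deriv (fun z => S (z, s)) y = g (y, s) :=
    fun y s => (sliceX hSd y s).deriv
  have hderivSt : ∀ y s : ℝ, deriv (fun z => S (y, z)) s = h (y, s) :=
    fun y s => (sliceT hSd y s).deriv
  -- A slices
  have hAfunT : (fun s => A (x, s)) = fun s => (R (x, s)) ^ 2 * g (x, s) := by
    funext s; rw [hA x s, hderivSx]
  have hAfunX : (fun y => A (y, t)) = fun y => (R (y, t)) ^ 2 * g (y, t) := by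
    funext y; rw [hA y t, hderivSx]
  have hAval : A (x, t) = r ^ 2 * sx := by rw [hA x t, hderivSx]
  have hAT : deriv (fun s => A (x, s)) t
      = (2 * r ^ 1 * rt) * sx + r ^ 2 * sxt := by
    rw [hAfunT]
    exact (((sliceT hRd x t).pow 2).mul hgT).deriv
  have hAX : deriv (fun y => A (y, t)) x
      = (2 * r ^ 1 * rx) * sx + r ^ 2 * sxx := by
    rw [hAfunX]
    exact (((sliceX hRd x t).pow 2).mul hgX).deriv
  have hRT : deriv (fun s => R (x, s)) t = rt := (sliceT hRd x t).deriv
  have hRX : deriv (fun y => R (y, t)) x = rx := (sliceX hRd x t).deriv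
  have hVX : deriv (fun y => V (y, t)) x = vx := (sliceX hVd x t).deriv
  -- Q slice from HJ equation
  have hQfun : (fun y => Q (y, t))
      = fun y => -(h (y, t) + (1 / (2 * m)) * (g (y, t)) ^ 2 + V (y, t)) := by
    funext y
    have := hHJ y t
    rw [hderivSx, hderivSt] at this
    linarith
  have hQX : deriv (fun y => Q (y, t)) x
      = -(sxt + (1 / (2 * m)) * (2 * sx ^ 1 * sxx) + vx) := by
    rw [hQfun]
    exact ((hhX.add (((hgX.pow 2)).const_mul (1 / (2 * m)))).add
      (sliceX hVd x t)).neg.deriv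
  rw [hVX, hQX, hAT, hAX, hRT, hRX, hAval]
  field_simp
  ring
end

section
/- Let m > 0, let V, Q : ℝ × ℝ → ℝ, and let ρ, S, Ŝ : ℝ × ℝ → ℝ be twice continuously differentiable with ρ > 0 everywhere. Suppose both S and Ŝ satisfy the quantum Hamilton–Jacobi equation with the same V and Q, i.e. ∂ₜS + (1/(2m))·(∂ₓS)² + V + Q = 0 and ∂ₜŜ + (1/(2m))·(∂ₓŜ)² + V + Q = 0, and that ρ satisfies the continuity equation with both: ∂ₜρ + (1/m)·∂ₓ(ρ·∂ₓS) = 0 and ∂ₜρ + (1/m)·∂ₓ(ρ·∂ₓŜ) = 0. Then: (i) ∂ₓ[ρ·(∂ₓŜ − ∂ₓS)] = 0 everywhere, so G₋(t) := (1/m)·ρ(x,t)·(∂ₓŜ(x,t) − ∂ₓS(x,t)) is independent of x; and (ii) setting G₊(x,t) := (1/m)·ρ·(∂ₓŜ + ∂ₓS), one has for all (x,t): ∂ₜŜ − ∂ₜS = −(m/(2·ρ²))·G₋(t)·G₊(x,t). -/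
/-!
Subtracting the two continuity equations leaves `∂ₓ[ρ (∂ₓŜ − ∂ₓS)] = 0`, so `G₋` depends on `t`
alone. Subtracting the two Hamilton–Jacobi equations cancels `V + Q` and leaves
`∂ₜŜ − ∂ₜS = −(1/(2m)) ((∂ₓŜ)² − (∂ₓS)²)`; factoring the difference of squares and inserting
`ρ / m` into each factor (legitimate since `ρ > 0`) gives `−(m/(2ρ²)) G₋ G₊`.
-/

lemma ContDiff.differentiable_deriv_slice {F : Type*} [NormedAddCommGroup F] [NormedSpace ℝ F]
    {f : ℝ × ℝ → F} (hf : ContDiff ℝ 2 f) (t : ℝ) :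
    Differentiable ℝ (deriv fun x => f (x, t)) :=
  (hf.comp (contDiff_prodMk_left t)).differentiable_deriv_two

lemma deriv_mul_sub_eq_sub_deriv_mul {r u v : ℝ → ℝ} {x : ℝ} (hr : DifferentiableAt ℝ r x)
    (hu : DifferentiableAt ℝ u x) (hv : DifferentiableAt ℝ v x) :
    deriv (fun y => r y * (u y - v y)) x
      = deriv (fun y => r y * u y) x - deriv (fun y => r y * v y) x := by
  simp_rw [mul_sub]
  exact deriv_fun_sub (hr.mul hu) (hr.mul hv)

lemma sub_eq_neg_mul_of_hamiltonJacobi {m ρ σ σhat p phat v q : ℝ} (hm : m ≠ 0) (hρ : ρ ≠ 0)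
    (hHJ : σ + 1 / (2 * m) * p ^ 2 + v + q = 0)
    (hHJhat : σhat + 1 / (2 * m) * phat ^ 2 + v + q = 0) :
    σhat - σ = -(m / (2 * ρ ^ 2)) * (1 / m * ρ * (phat - p)) * (1 / m * ρ * (phat + p)) := by
  have hdiff : σhat - σ = 1 / (2 * m) * (p ^ 2 - phat ^ 2) := by linarith
  rw [hdiff]
  field_simp
  ring

/-- Equations (9.7)–(9.8) of Corollary 9.2 of the paper: two phases `S`, `Ŝ` compatible
with the same `ρ`, `V`, `Q` via the quantum Hamilton–Jacobi and continuity equations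
satisfy `∂ₓ[ρ(∂ₓŜ − ∂ₓS)] = 0` (so `G₋` is a function of `t` alone) and
`∂ₜŜ − ∂ₜS = −(m/(2ρ²))·G₋·G₊`. -/
theorem two_phases_same_density
    (m : ℝ) (hm : 0 < m)
    (V Q : ℝ × ℝ → ℝ)
    (ρ S Shat : ℝ × ℝ → ℝ)
    (hρ : ContDiff ℝ 2 ρ) (hS : ContDiff ℝ 2 S) (hShat : ContDiff ℝ 2 Shat)
    (hρpos : ∀ p : ℝ × ℝ, 0 < ρ p)
    (hHJ : ∀ x t : ℝ,
      deriv (fun s => S (x, s)) t + (1 / (2 * m)) * (deriv (fun y => S (y, t)) x) ^ 2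
        + V (x, t) + Q (x, t) = 0)
    (hHJhat : ∀ x t : ℝ,
      deriv (fun s => Shat (x, s)) t + (1 / (2 * m)) * (deriv (fun y => Shat (y, t)) x) ^ 2
        + V (x, t) + Q (x, t) = 0)
    (hCont : ∀ x t : ℝ,
      deriv (fun s => ρ (x, s)) t
        + (1 / m) * deriv (fun y => ρ (y, t) * deriv (fun z => S (z, t)) y) x = 0)
    (hConthat : ∀ x t : ℝ,
      deriv (fun s => ρ (x, s)) t
        + (1 / m) * deriv (fun y => ρ (y, t) * deriv (fun z => Shat (z, t)) y) x = 0) :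
    (∀ x t : ℝ,
      deriv (fun y => ρ (y, t) * (deriv (fun z => Shat (z, t)) y - deriv (fun z => S (z, t)) y)) x
        = 0)
    ∧ (∀ x₁ x₂ t : ℝ,
        (1 / m) * ρ (x₁, t) * (deriv (fun z => Shat (z, t)) x₁ - deriv (fun z => S (z, t)) x₁)
          = (1 / m) * ρ (x₂, t) * (deriv (fun z => Shat (z, t)) x₂ - deriv (fun z => S (z, t)) x₂))
    ∧ (∀ x t : ℝ,
        deriv (fun s => Shat (x, s)) t - deriv (fun s => S (x, s)) t
          = -(m / (2 * (ρ (x, t)) ^ 2))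
              * ((1 / m) * ρ (0, t) * (deriv (fun z => Shat (z, t)) 0 - deriv (fun z => S (z, t)) 0))
              * ((1 / m) * ρ (x, t) * (deriv (fun z => Shat (z, t)) x + deriv (fun z => S (z, t)) x))) := by
  have hρx (t : ℝ) : Differentiable ℝ fun y => ρ (y, t) :=
    (hρ.comp (contDiff_prodMk_left t)).differentiable two_ne_zero
  have flux_deriv_eq (x t : ℝ) :
      deriv (fun y => ρ (y, t) * deriv (fun z => Shat (z, t)) y) x
        = deriv (fun y => ρ (y, t) * deriv (fun z => S (z, t)) y) x :=
    mul_left_cancel₀ (one_div_ne_zero hm.ne') (by linarith [hCont x t, hConthat x t])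
  have part1 (x t : ℝ) :
      deriv (fun y => ρ (y, t) * (deriv (fun z => Shat (z, t)) y - deriv (fun z => S (z, t)) y)) x
        = 0 := by
    rw [deriv_mul_sub_eq_sub_deriv_mul (hρx t x) (hShat.differentiable_deriv_slice t x)
      (hS.differentiable_deriv_slice t x), flux_deriv_eq, sub_self]
  have part2 (x₁ x₂ t : ℝ) :
      (1 / m) * ρ (x₁, t) * (deriv (fun z => Shat (z, t)) x₁ - deriv (fun z => S (z, t)) x₁)
        = (1 / m) * ρ (x₂, t) * (deriv (fun z => Shat (z, t)) x₂ - deriv (fun z => S (z, t)) x₂) := by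
    rw [mul_assoc, mul_assoc]
    exact congrArg _ <| is_const_of_deriv_eq_zero
      ((hρx t).mul ((hShat.differentiable_deriv_slice t).sub (hS.differentiable_deriv_slice t)))
      (part1 · t) x₁ x₂
  refine ⟨part1, part2, fun x t => ?_⟩
  rw [part2 0 x t]
  exact sub_eq_neg_mul_of_hamiltonJacobi hm.ne' (hρpos (x, t)).ne' (hHJ x t) (hHJhat x t)
end

section
/- Let ℏ > 0 and for each α ∈ ℝ define the transformation T_α on pairs (a,b) of positive reals (a = Δx², b = Δp²) by T_α(a,b) = ( e^{−α}·a , e^{−α}·b + (ℏ²/4)·(e^{α} − e^{−α})/a ). Then for all a, b > 0 and α, β ∈ ℝ: (i) writing (a',b') = T_α(a,b), one has a'·b' = e^{−2α}·a·b + (ℏ²/4)·(1 − e^{−2α}); (ii) if a·b ≥ ℏ²/4 then a'·b' ≥ ℏ²/4; and (iii) T_α(T_β(a,b)) = T_{α+β}(a,b), so the transformations form a one-parameter group. -/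
/-! The map `(a, b) ↦ a b - c` is only rescaled by `e^{-2α}` under the dilatation, so the
Heisenberg bound `a b ≥ c = ℏ²/4` is preserved; the group law reduces, after clearing the
denominators `a` and `e^{-β} a`, to `e^{α} e^{β} = e^{α+β}`. -/

open Real

namespace Dilatation

/-- The dilatation `T_α` acting on `(Δx², Δp²)`, with `c = ℏ²/4`. -/
noncomputable def act (c α : ℝ) (p : ℝ × ℝ) : ℝ × ℝ :=
  (exp (-α) * p.1, exp (-α) * p.2 + c * (exp α - exp (-α)) / p.1)

variable {c a b : ℝ}

theorem act_fst_mul_snd (α : ℝ) (ha : a ≠ 0) :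
    (act c α (a, b)).1 * (act c α (a, b)).2
      = exp (-(2 * α)) * (a * b) + c * (1 - exp (-(2 * α))) := by
  simp only [act, two_mul, neg_add, exp_add, exp_neg]
  field_simp

theorem le_act_fst_mul_snd (α : ℝ) (ha : a ≠ 0) (hab : c ≤ a * b) :
    c ≤ (act c α (a, b)).1 * (act c α (a, b)).2 := by
  rw [act_fst_mul_snd α ha]
  nlinarith [exp_pos (-(2 * α))]

theorem act_act (α β : ℝ) {p : ℝ × ℝ} (hp : p.1 ≠ 0) :
    act c α (act c β p) = act c (α + β) p := by
  simp only [act, neg_add, exp_add, exp_neg, Prod.mk.injEq]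
  constructor
  · ring
  · field_simp
    ring

end Dilatation

theorem uncertainty_dilatation_group_general
    (ℏ : ℝ)
    (T : ℝ → ℝ × ℝ → ℝ × ℝ)
    (hT : ∀ (α : ℝ) (a b : ℝ),
      T α (a, b)
        = (Real.exp (-α) * a,
           Real.exp (-α) * b + (ℏ ^ 2 / 4) * (Real.exp α - Real.exp (-α)) / a)) :
    ∀ a b : ℝ, 0 < a → 0 < b → ∀ α β : ℝ,
      ((T α (a, b)).1 * (T α (a, b)).2
        = Real.exp (-(2 * α)) * (a * b) + (ℏ ^ 2 / 4) * (1 - Real.exp (-(2 * α))))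
      ∧ (ℏ ^ 2 / 4 ≤ a * b → ℏ ^ 2 / 4 ≤ (T α (a, b)).1 * (T α (a, b)).2)
      ∧ (T α (T β (a, b)) = T (α + β) (a, b)) := by
  have hT : T = Dilatation.act (ℏ ^ 2 / 4) := funext fun α ↦ funext fun p ↦ hT α p.1 p.2
  subst hT
  intro a b ha _ α β
  exact ⟨Dilatation.act_fst_mul_snd α ha.ne', Dilatation.le_act_fst_mul_snd α ha.ne',
    Dilatation.act_act α β ha.ne'⟩

/-- Transformation laws (7.1)–(7.2) of the paper: the dilatation transformations on
`(Δx², Δp²)` satisfy the product law, preserve the Heisenberg relation `Δx²·Δp² ≥ ℏ²/4`,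
and form a one-parameter group. -/
theorem uncertainty_dilatation_group
    (ℏ : ℝ) (hℏ : 0 < ℏ)
    (T : ℝ → ℝ × ℝ → ℝ × ℝ)
    (hT : ∀ (α : ℝ) (a b : ℝ),
      T α (a, b)
        = (Real.exp (-α) * a,
           Real.exp (-α) * b + (ℏ ^ 2 / 4) * (Real.exp α - Real.exp (-α)) / a)) :
    ∀ a b : ℝ, 0 < a → 0 < b → ∀ α β : ℝ,
      ((T α (a, b)).1 * (T α (a, b)).2
        = Real.exp (-(2 * α)) * (a * b) + (ℏ ^ 2 / 4) * (1 - Real.exp (-(2 * α))))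
      ∧ (ℏ ^ 2 / 4 ≤ a * b → ℏ ^ 2 / 4 ≤ (T α (a, b)).1 * (T α (a, b)).2)
      ∧ (T α (T β (a, b)) = T (α + β) (a, b)) :=
  uncertainty_dilatation_group_general ℏ T hT
end

section
/- Let m, ℏ > 0 and α ∈ ℝ. Let ρ : ℝ³ → ℝ be continuously differentiable with ρ > 0 everywhere, and S : ℝ³ → ℝ continuously differentiable, with ρ·|∇S|² and |∇√ρ|² integrable. Define the dilated fields ρ'(x) = e^{3α/2}·ρ(e^{α/2}·x) and S'(x) = e^{−α}·S(e^{α/2}·x). Then: (i) ∫_{ℝ³} ρ'·|∇S'|² dx = e^{−α}·∫_{ℝ³} ρ·|∇S|² dx; (ii) ∫_{ℝ³} |∇√ρ'|² dx = e^{α}·∫_{ℝ³} |∇√ρ|² dx; and consequently (iii) defining ℌ_q[ρ,S] = ∫ [ ρ|∇S|²/(2m) + (ℏ²/(2m))|∇√ρ|² ] dx and 𝔎_q[ρ,S] = ∫ [ ρ|∇S|²/(2m) − (ℏ²/(2m))|∇√ρ|² ] dx, one has ℌ_q[ρ',S'] = cosh(α)·ℌ_q[ρ,S] − sinh(α)·𝔎_q[ρ,S].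 -/
/-!
Write `k = e^{α/2}`, so that `ρ' = k³ ρ(k·)` and `S' = k⁻² S(k·)`. The gradient of `x ↦ c f(k x)`
is `c k (∇f)(k x)`, so the kinetic density of the dilated fields is `k³ · k⁻² (ρ|∇S|²)(k x)` and
the Fisher density is `k³ · k² |∇√ρ|²(k x)`. The change of variables `y = k x` absorbs exactly the
factor `k³`, leaving `k⁻² = e^{-α}` and `k² = e^{α}`. Finally `cosh α (a + b) - sinh α (a - b)`
equals `e^{-α} a + e^{α} b`, which is the Lorentz-boost form of (iii).
-/

open MeasureTheory InnerProductSpace Module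

section Gradient

variable {F : Type*} [NormedAddCommGroup F] [InnerProductSpace ℝ F] [CompleteSpace F]

theorem gradient_comp_smul (f : F → ℝ) (k : ℝ) (x : F) :
    gradient (fun y => f (k • y)) x = k • gradient f (k • x) := by
  simp only [gradient, fderiv_comp_smul, LinearIsometryEquiv.map_smulₛₗ, starRingEnd_apply,
    star_trivial]

theorem gradient_const_mul (f : F → ℝ) (c : ℝ) (x : F) :
    gradient (fun y => c * f y) x = c • gradient f x := by
  simp only [gradient, ← smul_eq_mul (a := c), ← Pi.smul_def, fderiv_const_smul_field,
    Pi.smul_apply, LinearIsometryEquiv.map_smulₛₗ, starRingEnd_apply, star_trivial]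

theorem norm_gradient_const_mul_comp_smul_sq (f : F → ℝ) (c k : ℝ) (x : F) :
    ‖gradient (fun y => c * f (k • y)) x‖ ^ 2 = (c * k) ^ 2 * ‖gradient f (k • x)‖ ^ 2 := by
  rw [gradient_const_mul (fun y => f (k • y)), gradient_comp_smul, smul_smul, norm_smul,
    Real.norm_eq_abs, mul_pow, sq_abs]

end Gradient

section ChangeOfVariables

variable {E : Type*} [NormedAddCommGroup E] [NormedSpace ℝ E] [FiniteDimensional ℝ E]
  [MeasurableSpace E] [BorelSpace E] (μ : Measure E) [μ.IsAddHaarMeasure]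

theorem integral_pow_finrank_mul_comp_smul (g : E → ℝ) {k : ℝ} (hk : 0 < k) :
    ∫ x, k ^ finrank ℝ E * g (k • x) ∂μ = ∫ x, g x ∂μ := by
  rw [integral_const_mul, Measure.integral_comp_smul_of_nonneg μ g k (hR := hk.le), smul_eq_mul,
    mul_inv_cancel_left₀ (pow_ne_zero _ hk.ne')]

theorem MeasureTheory.Integrable.pow_finrank_mul_comp_smul {g : E → ℝ} (hg : Integrable g μ)
    {k : ℝ} (hk : k ≠ 0) : Integrable (fun x => k ^ finrank ℝ E * g (k • x)) μ :=
  (hg.comp_smul hk).const_mul _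

end ChangeOfVariables

section Dilatation

variable {E : Type*} [NormedAddCommGroup E] [InnerProductSpace ℝ E]

/-- The factor `k ^ finrank ℝ E` keeps `∫ ρ` unchanged. -/
noncomputable def dilateDensity (k : ℝ) (ρ : E → ℝ) : E → ℝ :=
  fun x => k ^ finrank ℝ E * ρ (k • x)

noncomputable def dilatePhase (k : ℝ) (S : E → ℝ) : E → ℝ :=
  fun x => (k ^ 2)⁻¹ * S (k • x)

section Pointwise

variable [CompleteSpace E]

theorem dilateDensity_mul_norm_gradient_dilatePhase_sq (ρ S : E → ℝ) {k : ℝ} (hk : k ≠ 0)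
    (x : E) :
    dilateDensity k ρ x * ‖gradient (dilatePhase k S) x‖ ^ 2
      = k ^ finrank ℝ E * ((k ^ 2)⁻¹ * (ρ (k • x) * ‖gradient S (k • x)‖ ^ 2)) := by
  unfold dilateDensity dilatePhase
  rw [norm_gradient_const_mul_comp_smul_sq]
  field_simp

theorem norm_gradient_sqrt_dilateDensity_sq (ρ : E → ℝ) {k : ℝ} (hk : 0 ≤ k) (x : E) :
    ‖gradient (fun y => Real.sqrt (dilateDensity k ρ y)) x‖ ^ 2
      = k ^ finrank ℝ E * (k ^ 2 * ‖gradient (fun y => Real.sqrt (ρ y)) (k • x)‖ ^ 2) := by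
  simp only [dilateDensity, Real.sqrt_mul (pow_nonneg hk _)]
  rw [norm_gradient_const_mul_comp_smul_sq (fun y => Real.sqrt (ρ y)), mul_pow,
    Real.sq_sqrt (pow_nonneg hk _), mul_assoc]

end Pointwise

variable [FiniteDimensional ℝ E] [MeasurableSpace E] [BorelSpace E] (μ : Measure E)
  [μ.IsAddHaarMeasure]

theorem integral_dilateDensity_mul_norm_gradient_dilatePhase_sq (ρ S : E → ℝ) {k : ℝ}
    (hk : 0 < k) :
    ∫ x, dilateDensity k ρ x * ‖gradient (dilatePhase k S) x‖ ^ 2 ∂μ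
      = (k ^ 2)⁻¹ * ∫ x, ρ x * ‖gradient S x‖ ^ 2 ∂μ := by
  simp_rw [dilateDensity_mul_norm_gradient_dilatePhase_sq ρ S hk.ne']
  rw [integral_pow_finrank_mul_comp_smul μ
    (fun y => (k ^ 2)⁻¹ * (ρ y * ‖gradient S y‖ ^ 2)) hk, integral_const_mul]

theorem integral_norm_gradient_sqrt_dilateDensity_sq (ρ : E → ℝ) {k : ℝ} (hk : 0 < k) :
    ∫ x, ‖gradient (fun y => Real.sqrt (dilateDensity k ρ y)) x‖ ^ 2 ∂μ
      = k ^ 2 * ∫ x, ‖gradient (fun y => Real.sqrt (ρ y)) x‖ ^ 2 ∂μ := by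
  simp_rw [norm_gradient_sqrt_dilateDensity_sq ρ hk.le]
  rw [integral_pow_finrank_mul_comp_smul μ
    (fun y => k ^ 2 * ‖gradient (fun z => Real.sqrt (ρ z)) y‖ ^ 2) hk, integral_const_mul]

theorem MeasureTheory.Integrable.dilateDensity_mul_norm_gradient_dilatePhase_sq {ρ S : E → ℝ}
    (h : Integrable (fun x => ρ x * ‖gradient S x‖ ^ 2) μ) {k : ℝ} (hk : k ≠ 0) :
    Integrable (fun x => dilateDensity k ρ x * ‖gradient (dilatePhase k S) x‖ ^ 2) μ := by
  simp_rw [_root_.dilateDensity_mul_norm_gradient_dilatePhase_sq ρ S hk]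
  exact (h.const_mul _).pow_finrank_mul_comp_smul μ hk

theorem MeasureTheory.Integrable.norm_gradient_sqrt_dilateDensity_sq {ρ : E → ℝ}
    (h : Integrable (fun x => ‖gradient (fun y => Real.sqrt (ρ y)) x‖ ^ 2) μ) {k : ℝ}
    (hk : 0 < k) :
    Integrable (fun x => ‖gradient (fun y => Real.sqrt (dilateDensity k ρ y)) x‖ ^ 2) μ := by
  simp_rw [_root_.norm_gradient_sqrt_dilateDensity_sq ρ hk.le]
  exact (h.const_mul _).pow_finrank_mul_comp_smul μ hk.ne'

end Dilatation

theorem Real.cosh_mul_add_sub_sinh_mul_sub (α a b : ℝ) :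
    Real.cosh α * (a + b) - Real.sinh α * (a - b) = Real.exp (-α) * a + Real.exp α * b := by
  rw [Real.cosh_eq, Real.sinh_eq]
  ring

theorem dilatation_transformation_of_quantum_hamiltonian_general
    (m ℏ α : ℝ)
    (ρ S : EuclideanSpace ℝ (Fin 3) → ℝ)
    (hint1 : Integrable (fun x => ρ x * ‖gradient S x‖ ^ 2))
    (hint2 : Integrable (fun x => ‖gradient (fun y => Real.sqrt (ρ y)) x‖ ^ 2))
    (ρ' S' : EuclideanSpace ℝ (Fin 3) → ℝ)
    (hρ' : ∀ x, ρ' x = Real.exp (3 * α / 2) * ρ (Real.exp (α / 2) • x))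
    (hS' : ∀ x, S' x = Real.exp (-α) * S (Real.exp (α / 2) • x)) :
    ((∫ x : EuclideanSpace ℝ (Fin 3), ρ' x * ‖gradient S' x‖ ^ 2)
        = Real.exp (-α) * ∫ x : EuclideanSpace ℝ (Fin 3), ρ x * ‖gradient S x‖ ^ 2)
    ∧
    ((∫ x : EuclideanSpace ℝ (Fin 3), ‖gradient (fun y => Real.sqrt (ρ' y)) x‖ ^ 2)
        = Real.exp α * ∫ x : EuclideanSpace ℝ (Fin 3), ‖gradient (fun y => Real.sqrt (ρ y)) x‖ ^ 2)
    ∧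
    ((∫ x : EuclideanSpace ℝ (Fin 3),
        (ρ' x * ‖gradient S' x‖ ^ 2 / (2 * m)
          + (ℏ ^ 2 / (2 * m)) * ‖gradient (fun y => Real.sqrt (ρ' y)) x‖ ^ 2))
      = Real.cosh α * (∫ x : EuclideanSpace ℝ (Fin 3),
            (ρ x * ‖gradient S x‖ ^ 2 / (2 * m)
              + (ℏ ^ 2 / (2 * m)) * ‖gradient (fun y => Real.sqrt (ρ y)) x‖ ^ 2))
        - Real.sinh α * (∫ x : EuclideanSpace ℝ (Fin 3),
            (ρ x * ‖gradient S x‖ ^ 2 / (2 * m)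
              - (ℏ ^ 2 / (2 * m)) * ‖gradient (fun y => Real.sqrt (ρ y)) x‖ ^ 2))) := by
  set k := Real.exp (α / 2)
  have hk : 0 < k := Real.exp_pos _
  have hk2 : k ^ 2 = Real.exp α := by rw [← Real.exp_nat_mul]; ring_nf
  obtain rfl : ρ' = dilateDensity k ρ := funext fun x => by
    rw [hρ' x, dilateDensity, finrank_euclideanSpace_fin, ← Real.exp_nat_mul]; ring_nf
  obtain rfl : S' = dilatePhase k S := funext fun x => by
    rw [hS' x, dilatePhase, hk2, Real.exp_neg]
  have kinetic := integral_dilateDensity_mul_norm_gradient_dilatePhase_sq volume ρ S hk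
  have fisher := integral_norm_gradient_sqrt_dilateDensity_sq volume ρ hk
  rw [hk2, ← Real.exp_neg] at kinetic
  rw [hk2] at fisher
  refine ⟨kinetic, fisher, ?_⟩
  have hint1' := hint1.dilateDensity_mul_norm_gradient_dilatePhase_sq volume hk.ne'
  have hint2' := hint2.norm_gradient_sqrt_dilateDensity_sq volume hk
  rw [integral_add (hint1'.div_const _) (hint2'.const_mul _),
    integral_add (hint1.div_const _) (hint2.const_mul _),
    integral_sub (hint1.div_const _) (hint2.const_mul _),
    integral_div, integral_div, integral_const_mul, integral_const_mul, kinetic, fisher,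
    Real.cosh_mul_add_sub_sinh_mul_sub]
  ring

/-- Transformation laws (7F) and (7.7)–(7.8) of the paper: under space dilatations
`ρ'(x) = e^{3α/2}ρ(e^{α/2}x)`, `S'(x) = e^{−α}S(e^{α/2}x)`, the classical kinetic term
scales by `e^{−α}`, the Fisher term scales by `e^{α}`, and the quantum Hamiltonian
transforms as `ℌ_q' = cosh(α)ℌ_q − sinh(α)𝔎_q`. -/
theorem dilatation_transformation_of_quantum_hamiltonian
    (m ℏ α : ℝ) (hm : 0 < m) (hℏ : 0 < ℏ)
    (ρ S : EuclideanSpace ℝ (Fin 3) → ℝ)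
    (hρ : ContDiff ℝ 1 ρ) (hρpos : ∀ x, 0 < ρ x)
    (hS : ContDiff ℝ 1 S)
    (hint1 : Integrable (fun x => ρ x * ‖gradient S x‖ ^ 2))
    (hint2 : Integrable (fun x => ‖gradient (fun y => Real.sqrt (ρ y)) x‖ ^ 2))
    (ρ' S' : EuclideanSpace ℝ (Fin 3) → ℝ)
    (hρ' : ∀ x, ρ' x = Real.exp (3 * α / 2) * ρ (Real.exp (α / 2) • x))
    (hS' : ∀ x, S' x = Real.exp (-α) * S (Real.exp (α / 2) • x)) :
    ((∫ x : EuclideanSpace ℝ (Fin 3), ρ' x * ‖gradient S' x‖ ^ 2)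
        = Real.exp (-α) * ∫ x : EuclideanSpace ℝ (Fin 3), ρ x * ‖gradient S x‖ ^ 2)
    ∧
    ((∫ x : EuclideanSpace ℝ (Fin 3), ‖gradient (fun y => Real.sqrt (ρ' y)) x‖ ^ 2)
        = Real.exp α * ∫ x : EuclideanSpace ℝ (Fin 3), ‖gradient (fun y => Real.sqrt (ρ y)) x‖ ^ 2)
    ∧
    ((∫ x : EuclideanSpace ℝ (Fin 3),
        (ρ' x * ‖gradient S' x‖ ^ 2 / (2 * m)
          + (ℏ ^ 2 / (2 * m)) * ‖gradient (fun y => Real.sqrt (ρ' y)) x‖ ^ 2))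
      = Real.cosh α * (∫ x : EuclideanSpace ℝ (Fin 3),
            (ρ x * ‖gradient S x‖ ^ 2 / (2 * m)
              + (ℏ ^ 2 / (2 * m)) * ‖gradient (fun y => Real.sqrt (ρ y)) x‖ ^ 2))
        - Real.sinh α * (∫ x : EuclideanSpace ℝ (Fin 3),
            (ρ x * ‖gradient S x‖ ^ 2 / (2 * m)
              - (ℏ ^ 2 / (2 * m)) * ‖gradient (fun y => Real.sqrt (ρ y)) x‖ ^ 2))) :=
  dilatation_transformation_of_quantum_hamiltonian_general m ℏ α ρ S hint1 hint2 ρ' S' hρ' hS'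
end
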